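/- Let f : ℝ₊ × X → X be a continuous semiflow on a compact metric space X. A point x ∈ X satisfies x ∈ C_x if and only if for every neighborhood U of x, limsup_{T→∞} (1/T) λ{t ∈ [0,T] : f(t,x) ∈ U} > 0. -/

import Mathlib

/-!
If some neighbourhood `ball x (2δ)` of a point `x ∈ C` were visited with density zero, then
`C \ ball x δ` would still be a center of attraction: up to that density-zero set of times, being
near `C` means being near `C \ ball x δ`. This contradicts minimality. Conversely, if `x ∉ C`, a
small ball around `x` is disjoint from a thickening of `C`; the thickening is visited with
density one, so the ball is visited with density zero.
-/

open MeasureTheory Filter Metric Set Topology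
open scoped Classical

noncomputable section

/-- The set `S ⊆ ℝ` has density `α` in `[0,∞)`. -/
def HasDens (S : Set ℝ) (α : ℝ) : Prop :=
  Filter.Tendsto (fun T : ℝ => (MeasureTheory.volume (S ∩ Set.Icc 0 T)).toReal / T)
    Filter.atTop (nhds α)

/-- `f` is a continuous semiflow on `X` (time in `[0,∞)`). -/
def IsSemiflow {X : Type*} [MetricSpace X] (f : ℝ → X → X) : Prop :=
  ContinuousOn (fun p : ℝ × X => f p.1 p.2) (Set.Ici 0 ×ˢ Set.univ) ∧
  (∀ x : X, f 0 x = x) ∧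
  (∀ s t : ℝ, 0 ≤ s → 0 ≤ t → ∀ x : X, f s (f t x) = f (s + t) x)

/-- `C` is a center of attraction of the motion `f (t, x)`. -/
def IsCtr {X : Type*} [MetricSpace X] (f : ℝ → X → X) (x : X) (C : Set X) : Prop :=
  IsClosed C ∧ ∀ ε > (0 : ℝ), HasDens {t : ℝ | 0 ≤ t ∧ f t x ∈ Metric.thickening ε C} 1

/-- `C` is the minimal center of attraction of the motion `f (t, x)`. -/
def IsMCA {X : Type*} [MetricSpace X] (f : ℝ → X → X) (x : X) (C : Set X) : Prop :=
  IsCtr f x C ∧ ∀ C' ⊆ C, IsCtr f x C' → C' = C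

def densityRatio (A : Set ℝ) (T : ℝ) : ℝ := (volume (A ∩ Icc 0 T)).toReal / T

lemma hasDens_iff_tendsto_densityRatio (A : Set ℝ) (α : ℝ) :
    HasDens A α ↔ Tendsto (densityRatio A) atTop (𝓝 α) := Iff.rfl

lemma densityRatio_setOf (p : ℝ → Prop) (T : ℝ) :
    (volume {t ∈ Icc 0 T | p t}).toReal / T = densityRatio {t | p t} T := by
  rw [densityRatio, inter_comm]
  rfl

lemma volume_inter_Icc_ne_top (A : Set ℝ) (T : ℝ) : volume (A ∩ Icc 0 T) ≠ ⊤ :=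
  measure_ne_top_of_subset inter_subset_right (by simp)

lemma densityRatio_of_nonpos (A : Set ℝ) {T : ℝ} (hT : T ≤ 0) : densityRatio A T = 0 := by
  rcases hT.lt_or_eq with hT | rfl
  · simp [densityRatio, Icc_eq_empty_of_lt hT]
  · exact div_zero _

lemma densityRatio_nonneg (A : Set ℝ) (T : ℝ) : 0 ≤ densityRatio A T := by
  rcases le_or_gt T 0 with hT | hT
  · exact (densityRatio_of_nonpos A hT).ge
  · exact div_nonneg ENNReal.toReal_nonneg hT.le

lemma densityRatio_le_one (A : Set ℝ) (T : ℝ) : densityRatio A T ≤ 1 := by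
  rcases le_or_gt T 0 with hT | hT
  · exact (densityRatio_of_nonpos A hT).trans_le zero_le_one
  · rw [densityRatio, div_le_one hT]
    calc (volume (A ∩ Icc 0 T)).toReal ≤ (volume (Icc 0 T)).toReal :=
          ENNReal.toReal_mono (by simp) (measure_mono inter_subset_right)
      _ = T := by simp [hT.le]

lemma densityRatio_mono {A B : Set ℝ} (hAB : A ⊆ B) (T : ℝ) :
    densityRatio A T ≤ densityRatio B T := by
  rcases le_or_gt T 0 with hT | hT
  · simp [densityRatio_of_nonpos _ hT]
  · exact div_le_div_of_nonneg_right (ENNReal.toReal_mono (volume_inter_Icc_ne_top B T)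
      (measure_mono (inter_subset_inter_left _ hAB))) hT.le

lemma densityRatio_union_le (A B : Set ℝ) (T : ℝ) :
    densityRatio (A ∪ B) T ≤ densityRatio A T + densityRatio B T := by
  rcases le_or_gt T 0 with hT | hT
  · simp [densityRatio_of_nonpos _ hT]
  rw [densityRatio, densityRatio, densityRatio, ← add_div, union_inter_distrib_right]
  gcongr
  rw [← ENNReal.toReal_add (volume_inter_Icc_ne_top A T) (volume_inter_Icc_ne_top B T)]
  exact ENNReal.toReal_mono (by simp [volume_inter_Icc_ne_top]) (measure_union_le _ _)

lemma densityRatio_add_densityRatio_compl {S : Set ℝ} (hS : MeasurableSet S) {T : ℝ}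
    (hT : 0 < T) : densityRatio S T + densityRatio Sᶜ T = 1 := by
  have hsplit := measure_inter_add_sdiff (μ := volume) (Icc (0 : ℝ) T) hS
  rw [inter_comm, sdiff_eq_compl_inter, Real.volume_Icc, sub_zero] at hsplit
  rw [densityRatio, densityRatio, ← add_div, div_eq_one_iff_eq hT.ne',
    ← ENNReal.toReal_add (volume_inter_Icc_ne_top S T) (volume_inter_Icc_ne_top Sᶜ T), hsplit,
    ENNReal.toReal_ofReal hT.le]

namespace HasDens

variable {A B S : Set ℝ}

lemma one_of_subset_union (hA : HasDens A 1) (hB : HasDens B 0) (hAS : A ⊆ S ∪ B) :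
    HasDens S 1 := by
  rw [hasDens_iff_tendsto_densityRatio] at *
  have hlow : Tendsto (fun T => densityRatio A T - densityRatio B T) atTop (𝓝 1) := by
    simpa using hA.sub hB
  refine tendsto_of_tendsto_of_tendsto_of_le_of_le hlow tendsto_const_nhds (fun T => ?_)
    (densityRatio_le_one S)
  linarith [(densityRatio_mono hAS T).trans (densityRatio_union_le S B T)]

lemma zero_of_subset (hAB : A ⊆ B) (hB : HasDens B 0) : HasDens A 0 :=
  tendsto_of_tendsto_of_tendsto_of_le_of_le tendsto_const_nhds hB (densityRatio_nonneg A)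
    (densityRatio_mono hAB)

lemma compl (hS : MeasurableSet S) {α : ℝ} (h : HasDens S α) : HasDens Sᶜ (1 - α) := by
  rw [hasDens_iff_tendsto_densityRatio] at *
  refine (tendsto_const_nhds.sub h).congr' ?_
  filter_upwards [eventually_gt_atTop 0] with T hT
  linarith [densityRatio_add_densityRatio_compl hS hT]

end HasDens

lemma hasDens_zero_of_limsup_nonpos {A : Set ℝ} (h : limsup (densityRatio A) atTop ≤ 0) :
    HasDens A 0 := by
  have hle : IsBoundedUnder (· ≤ ·) atTop (densityRatio A) :=
    isBoundedUnder_of ⟨1, densityRatio_le_one A⟩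
  have hge : IsBoundedUnder (· ≥ ·) atTop (densityRatio A) :=
    isBoundedUnder_of ⟨0, densityRatio_nonneg A⟩
  exact tendsto_of_le_liminf_of_limsup_le
    (le_liminf_of_le hle.isCoboundedUnder_ge (.of_forall (densityRatio_nonneg A))) h hle hge

lemma ContinuousOn.measurableSet_inter_preimage {α β : Type*} [TopologicalSpace α]
    [MeasurableSpace α] [OpensMeasurableSpace α] [TopologicalSpace β] {g : α → β} {s : Set α}
    {U : Set β} (hg : ContinuousOn g s) (hs : MeasurableSet s) (hU : IsOpen U) :
    MeasurableSet (s ∩ g ⁻¹' U) := by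
  obtain ⟨u, hu, hgu⟩ := continuousOn_iff'.mp hg U hU
  rw [inter_comm, hgu]
  exact hu.measurableSet.inter hs

lemma IsSemiflow.continuousOn_orbit {X : Type*} [MetricSpace X] {f : ℝ → X → X}
    (hf : IsSemiflow f) (x : X) : ContinuousOn (fun t => f t x) (Ici 0) :=
  hf.1.comp (continuous_id.prodMk continuous_const).continuousOn fun _ ht => ⟨ht, mem_univ x⟩

namespace IsCtr

variable {X : Type*} [MetricSpace X] {f : ℝ → X → X} {x : X} {C : Set X}

lemma diff_ball (hC : IsCtr f x C) {y : X} {δ : ℝ} (hδ : 0 < δ)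
    (hvisits : HasDens {t | f t x ∈ ball y (2 * δ)} 0) : IsCtr f x (C \ ball y δ) := by
  refine ⟨hC.1.sdiff isOpen_ball, fun ε hε => ?_⟩
  refine (hC.2 (min ε δ) (lt_min hε hδ)).one_of_subset_union hvisits ?_
  rintro t ⟨ht, htC⟩
  obtain ⟨z, hzC, hz⟩ := mem_thickening_iff.mp htC
  by_cases hzy : z ∈ ball y δ
  · right
    calc dist (f t x) y ≤ dist (f t x) z + dist z y := dist_triangle _ _ _
      _ < min ε δ + δ := add_lt_add hz hzy
      _ ≤ 2 * δ := by linarith [min_le_right ε δ]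
  · left
    exact ⟨ht, mem_thickening_iff.mpr ⟨z, ⟨hzC, hzy⟩, hz.trans_le (min_le_left ε δ)⟩⟩

lemma exists_hasDens_zero_ball_of_notMem (hC : IsCtr f x C)
    (hcont : ContinuousOn (fun t => f t x) (Ici 0)) {y : X} (hy : y ∉ C) :
    ∃ r > 0, HasDens {t | f t x ∈ ball y r} 0 := by
  obtain ⟨r, hr, hball⟩ := Metric.isOpen_iff.mp hC.1.isOpen_compl y hy
  refine ⟨r / 2, half_pos hr, ?_⟩
  have hS := (hC.2 (r / 2) (half_pos hr)).compl
    (hcont.measurableSet_inter_preimage measurableSet_Ici isOpen_thickening)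
  rw [sub_self] at hS
  refine HasDens.zero_of_subset ?_ hS
  intro t ht htS
  obtain ⟨z, hzC, hz⟩ := mem_thickening_iff.mp htS.2
  refine hball ?_ hzC
  calc dist z y ≤ dist z (f t x) + dist (f t x) y := dist_triangle _ _ _
    _ < r / 2 + r / 2 := add_lt_add (by rwa [dist_comm]) ht
    _ = r := add_halves r

end IsCtr

theorem mem_mca_iff_positive_upper_density_general {X : Type*} [MetricSpace X]
    (f : ℝ → X → X) (hf : IsSemiflow f) (x : X) (C : Set X) (hC : IsMCA f x C) :
    x ∈ C ↔ ∀ U ∈ nhds x,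
      0 < Filter.limsup
        (fun T : ℝ => (MeasureTheory.volume {t ∈ Set.Icc 0 T | f t x ∈ U}).toReal / T)
        Filter.atTop := by
  simp only [densityRatio_setOf]
  constructor
  · intro hx U hU
    by_contra! hlimsup
    obtain ⟨ε, hε, hεU⟩ := Metric.mem_nhds_iff.mp hU
    have hvisits : HasDens {t | f t x ∈ ball x (2 * (ε / 2))} 0 := by
      rw [mul_div_cancel₀ ε two_ne_zero]
      exact (hasDens_zero_of_limsup_nonpos hlimsup).zero_of_subset fun t ht => hεU ht
    have hsmaller := hC.2 _ sdiff_subset (hC.1.diff_ball (half_pos hε) hvisits)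
    exact (hsmaller ▸ hx).2 (mem_ball_self (half_pos hε))
  · intro h
    by_contra hx
    obtain ⟨r, hr, hvisits⟩ :=
      hC.1.exists_hasDens_zero_ball_of_notMem (hf.continuousOn_orbit x) hx
    have hpos := h _ (ball_mem_nhds x hr)
    exact hpos.ne' hvisits.limsup_eq

theorem mem_mca_iff_positive_upper_density {X : Type*} [MetricSpace X] [CompactSpace X]
    (f : ℝ → X → X) (hf : IsSemiflow f) (x : X) (C : Set X) (hC : IsMCA f x C) :
    x ∈ C ↔ ∀ U ∈ nhds x,
      0 < Filter.limsup
        (fun T : ℝ => (MeasureTheory.volume {t ∈ Set.Icc 0 T | f t x ∈ U}).toReal / T)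
        Filter.atTop :=
  mem_mca_iff_positive_upper_density_general f hf x C hC
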